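/- arXiv:2208.08916 — 4 statements merged into one kernel-verified Lean document; each statement's English description precedes it below -/
import Mathlib

section
/- Let Q₁, Q₂, Q₃ : ℝ³ → ℝ be real quadratic forms and f := Q₁Q₃ − Q₂². Assume that fderiv ℝ f P ≠ 0 for every P ∈ ℝ³∖{0} with f(P) = 0 (i.e. the quartic Δ = {f = 0} is smooth at all of its real points). Then the following are equivalent: (a) for every P ∈ ℝ³∖{0} with f(P) = 0 there exist r, s ∈ ℝ with r² = Q₁(P), r·s = Q₂(P), s² = Q₃(P); (b) there is no tuple (u, v, w, r, s) ∈ ℝ⁵∖{0} with r² = −Q₁(u,v,w), r·s = Q₂(u,v,w), s² = −Q₃(u,v,w). (That is, the map Δ̃(ℝ) → Δ(ℝ) is surjective on real points if and only if the quadratic twist Δ̃⁻ has no real points.) -/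
/-!
A real zero `P ≠ 0` of `Q₁Q₃ − Q₂²` has `Q₁(P), Q₃(P)` of one sign, so it lifts either to `Δ̃`
(both `≥ 0`) or to `Δ̃⁻` (both `≤ 0`). A point lifting to both has `Q₁(P) = Q₂(P) = Q₃(P) = 0`,
and by the product rule the gradient of `Q₁Q₃ − Q₂²` vanishes there: this is excluded by
smoothness.
-/

theorem QuadraticMap.differentiable {𝕜 E F : Type*} [NontriviallyNormedField 𝕜] [CompleteSpace 𝕜]
    [NormedAddCommGroup E] [NormedSpace 𝕜 E] [FiniteDimensional 𝕜 E]
    [NormedAddCommGroup F] [NormedSpace 𝕜 F] (Q : QuadraticMap 𝕜 E F) :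
    Differentiable 𝕜 Q := by
  obtain ⟨B, rfl⟩ := LinearMap.BilinMap.toQuadraticMap_surjective Q
  let Bc : E →L[𝕜] E →L[𝕜] F :=
    LinearMap.toContinuousLinearMap (LinearMap.toContinuousLinearMap.toLinearMap ∘ₗ B)
  exact fun v => Bc.differentiableAt.clm_apply differentiableAt_id

theorem fderiv_mul_sub_sq_eq_zero {𝕜 E : Type*} [NontriviallyNormedField 𝕜]
    [NormedAddCommGroup E] [NormedSpace 𝕜 E] {g₁ g₂ g₃ : E → 𝕜} {P : E}
    (h₁ : DifferentiableAt 𝕜 g₁ P) (h₂ : DifferentiableAt 𝕜 g₂ P) (h₃ : DifferentiableAt 𝕜 g₃ P)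
    (hg₁ : g₁ P = 0) (hg₂ : g₂ P = 0) (hg₃ : g₃ P = 0) :
    fderiv 𝕜 (fun v => g₁ v * g₃ v - g₂ v ^ 2) P = 0 := by
  rw [((h₁.hasFDerivAt.fun_mul h₃.hasFDerivAt).fun_sub (h₂.hasFDerivAt.pow 2)).fderiv]
  ext v
  simp [hg₁, hg₂, hg₃]

theorem Real.exists_sq_eq_of_mul_eq_sq {a b c : ℝ} (ha : 0 ≤ a) (hb : 0 ≤ b) (h : a * b = c ^ 2) :
    ∃ r s : ℝ, r ^ 2 = a ∧ r * s = c ∧ s ^ 2 = b := by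
  have hrs : √a * √b = |c| := by rw [← Real.sqrt_mul ha, h, Real.sqrt_sq_eq_abs]
  rcases le_or_gt 0 c with hc | hc
  · exact ⟨√a, √b, Real.sq_sqrt ha, by rw [hrs, abs_of_nonneg hc], Real.sq_sqrt hb⟩
  · exact ⟨√a, -√b, Real.sq_sqrt ha, by rw [mul_neg, hrs, abs_of_neg hc, neg_neg],
      by rw [neg_sq, Real.sq_sqrt hb]⟩

theorem Real.exists_sq_eq_or_exists_sq_eq_neg_of_mul_eq_sq {a b c : ℝ} (h : a * b = c ^ 2) :
    (∃ r s : ℝ, r ^ 2 = a ∧ r * s = c ∧ s ^ 2 = b) ∨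
      ∃ r s : ℝ, r ^ 2 = -a ∧ r * s = c ∧ s ^ 2 = -b := by
  by_cases hab : 0 ≤ a ∧ 0 ≤ b
  · exact .inl (exists_sq_eq_of_mul_eq_sq hab.1 hab.2 h)
  · have hab' : a ≤ 0 ∧ b ≤ 0 := by
      rcases not_and_or.mp hab with ha | hb
      · exact ⟨by linarith, by nlinarith [sq_nonneg c]⟩
      · exact ⟨by nlinarith [sq_nonneg c], by linarith⟩
    exact .inr (exists_sq_eq_of_mul_eq_sq (neg_nonneg.2 hab'.1) (neg_nonneg.2 hab'.2)
      (by rw [neg_mul_neg, h]))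

/-- If the discriminant quartic `Δ = {f = 0}`, `f := Q₁Q₃ − Q₂²`, is smooth at all of its real
points, then the discriminant cover `Δ̃ → Δ` is surjective on real points if and only if the
quadratic twist `Δ̃⁻` has no real points. -/
theorem cover_surjective_iff_twist_pointless
    (Q₁ Q₂ Q₃ : QuadraticForm ℝ (Fin 3 → ℝ))
    (hsm : ∀ P : Fin 3 → ℝ, P ≠ 0 → Q₁ P * Q₃ P - Q₂ P ^ 2 = 0 →
      fderiv ℝ (fun v => Q₁ v * Q₃ v - Q₂ v ^ 2) P ≠ 0) :
    (∀ P : Fin 3 → ℝ, P ≠ 0 → Q₁ P * Q₃ P - Q₂ P ^ 2 = 0 →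
        ∃ r s : ℝ, r ^ 2 = Q₁ P ∧ r * s = Q₂ P ∧ s ^ 2 = Q₃ P) ↔
      ¬ ∃ (P : Fin 3 → ℝ) (r s : ℝ), (P ≠ 0 ∨ r ≠ 0 ∨ s ≠ 0) ∧
        r ^ 2 = -Q₁ P ∧ r * s = Q₂ P ∧ s ^ 2 = -Q₃ P := by
  constructor
  · rintro hcover ⟨P, r, s, hne, h₁, h₂, h₃⟩
    have hf : Q₁ P * Q₃ P - Q₂ P ^ 2 = 0 := by
      linear_combination Q₁ P * h₃ - s ^ 2 * h₁ + (r * s + Q₂ P) * h₂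
    have hP : P ≠ 0 := by
      rintro rfl
      simp only [QuadraticMap.map_zero, neg_zero, pow_eq_zero_iff two_ne_zero] at h₁ h₃
      simp [h₁, h₃] at hne
    obtain ⟨r', s', h₁', -, h₃'⟩ := hcover P hP hf
    have hQ₁ : Q₁ P = 0 := by nlinarith [sq_nonneg r, sq_nonneg r']
    have hQ₃ : Q₃ P = 0 := by nlinarith [sq_nonneg s, sq_nonneg s']
    have hQ₂ : Q₂ P = 0 := by simpa [hQ₁] using hf
    exact hsm P hP hf (fderiv_mul_sub_sq_eq_zero (Q₁.differentiable P) (Q₂.differentiable P)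
      (Q₃.differentiable P) hQ₁ hQ₂ hQ₃)
  · intro htwist P hP hf
    refine (Real.exists_sq_eq_or_exists_sq_eq_neg_of_mul_eq_sq (sub_eq_zero.1 hf)).resolve_right ?_
    rintro ⟨r, s, h₁, h₂, h₃⟩
    exact htwist ⟨P, r, s, .inl hP, h₁, h₂, h₃⟩
end

section
/- Let n ∈ ℕ, let A : ℝ → Matrix (Fin n) (Fin n) ℝ be continuous with A(t) symmetric for every t, let c ∈ ℝ and ε > 0 be such that det (A t) ≠ 0 whenever 0 < |t − c| < ε. Let k₋ (resp. k₊) be the constant number of positive eigenvalues, counted with multiplicity, of A(t) for t ∈ (c − ε, c) (resp. t ∈ (c, c + ε)). If det (A t) is strictly negative on one of the two intervals (c − ε, c), (c, c + ε) and strictly positive on the other, then k₊ − k₋ is odd; if moreover the kernel of A(c) is one-dimensional, then |k₊ − k₋| = 1. -/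
/-!
Along a continuous family of real symmetric matrices, the numbers of positive and of negative
eigenvalues are lower semicontinuous: a subspace on which the quadratic form of `A c` is
definite stays definite under small perturbations.  Off `c` no eigenvalue vanishes, so
`k₊ − k₋` is the difference of the numbers of negative eigenvalues on the two sides, whose
parities are read off from the signs of the determinant.  If `ker A(c)` is a line, `A(c)` has
`n − 1` nonzero eigenvalues, and semicontinuity squeezes both `k₋` and `k₊` into `{p, p + 1}`,
where `p` is the number of positive eigenvalues of `A(c)`.
-/

open Matrix Finset Module Filter Topology

theorem Module.Basis.finrank_le_card_filter_pos {ι K V : Type*} [Fintype ι] [Field K]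
    [LinearOrder K] [IsStrictOrderedRing K] [AddCommGroup V] [Module K V]
    (b : Basis ι K V) (g : ι → K) (U : Submodule K V)
    (hU : ∀ x ∈ U, x ≠ 0 → 0 < ∑ i, g i * b.repr x i ^ 2) :
    finrank K U ≤ #{i | 0 < g i} := by
  classical
  let φ : U →ₗ[K] ({i // 0 < g i} → K) := LinearMap.pi fun i => (b.coord i).comp U.subtype
  have hφ : Function.Injective φ := by
    rw [← LinearMap.ker_eq_bot, LinearMap.ker_eq_bot']
    intro x hx
    by_contra hx0
    have hle : ∑ i, g i * b.repr x i ^ 2 ≤ 0 := Finset.sum_nonpos fun i _ => by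
      by_cases hi : 0 < g i
      · have hxi : b.repr x i = 0 := by simpa [φ] using congrFun hx ⟨i, hi⟩
        simp [hxi]
      · exact mul_nonpos_of_nonpos_of_nonneg (not_lt.mp hi) (sq_nonneg _)
    exact (hU x x.2 (by simpa using hx0)).not_ge hle
  simpa [Fintype.card_subtype] using LinearMap.finrank_le_finrank_of_injective hφ

theorem OrthonormalBasis.exists_submodule_finrank_eq_card_filter_pos {ι E : Type*}
    [Fintype ι] [NormedAddCommGroup E] [InnerProductSpace ℝ E]
    (b : OrthonormalBasis ι ℝ E) (g : ι → ℝ) :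
    ∃ U : Submodule ℝ E, finrank ℝ U = #{i | 0 < g i} ∧
      ∃ μ > 0, ∀ x ∈ U, μ * ‖x‖ ^ 2 ≤ ∑ i, g i * b.repr x i ^ 2 := by
  classical
  have hsmall : ∀ᶠ μ in 𝓝[>] (0 : ℝ), ∀ i, 0 < g i → μ ≤ g i :=
    eventually_all.2 fun i => eventually_nhdsWithin_of_eventually_nhds <|
      if hi : 0 < g i then (eventually_le_nhds hi).mono fun _ h _ => h
      else .of_forall fun _ h => absurd h hi
  obtain ⟨μ, hμg, hμ⟩ := (hsmall.and self_mem_nhdsWithin).exists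
  refine ⟨Submodule.span ℝ (b.toBasis '' {i | 0 < g i}), ?_, μ, hμ, fun x hx => ?_⟩
  · rw [Set.image_eq_range, finrank_span_eq_card, Fintype.card_subtype]
    · rfl
    exact b.toBasis.linearIndependent.comp _ Subtype.val_injective
  · have hsupp : ∀ i, ¬ 0 < g i → b.repr x i = 0 := fun i hi => by
      simpa using Finsupp.notMem_support_iff.1 fun h => hi (b.toBasis.mem_span_image.1 hx h)
    rw [← b.repr.norm_map, EuclideanSpace.real_norm_sq_eq, Finset.mul_sum]
    refine Finset.sum_le_sum fun i _ => ?_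
    by_cases hi : 0 < g i
    · exact mul_le_mul_of_nonneg_right (hμg i hi) (sq_nonneg _)
    · simp [hsupp i hi]

theorem Matrix.continuous_toEuclideanCLM {𝕜 m : Type*} [RCLike 𝕜] [Fintype m]
    [DecidableEq m] :
    Continuous (toEuclideanCLM (n := m) (𝕜 := 𝕜)) :=
  (toEuclideanCLM (n := m) (𝕜 := 𝕜)).toAlgEquiv.toLinearMap.continuous_of_finiteDimensional

theorem Matrix.IsHermitian.inner_toEuclideanCLM_self {m : Type*} [Fintype m] [DecidableEq m]
    {B : Matrix m m ℝ} (hB : B.IsHermitian) (x : EuclideanSpace ℝ m) :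
    inner ℝ x (toEuclideanCLM (𝕜 := ℝ) B x) =
      ∑ i, hB.eigenvalues i * hB.eigenvectorBasis.repr x i ^ 2 := by
  set b := hB.eigenvectorBasis
  have hrepr :
      ∀ i, b.repr (toEuclideanCLM (𝕜 := ℝ) B x) i = hB.eigenvalues i * b.repr x i := by
    intro i
    have heig : toEuclideanCLM (𝕜 := ℝ) B (b i) = hB.eigenvalues i • b i :=
      (WithLp.ofLp_injective 2).eq_iff.1 (by simpa using hB.mulVec_eigenvectorBasis i)
    rw [b.repr_apply_apply, b.repr_apply_apply]
    change inner ℝ (b i) (toEuclideanLin B x) = _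
    rw [← isSymmetric_toEuclideanLin_iff.2 hB, ← coe_toEuclideanCLM_eq_toEuclideanLin,
      ContinuousLinearMap.coe_coe, heig, real_inner_smul_left]
  rw [← b.repr.inner_map_map, PiLp.inner_apply]
  refine Finset.sum_congr rfl fun i _ => ?_
  rw [hrepr, RCLike.inner_apply, conj_trivial]
  ring

theorem ContinuousLinearMap.abs_real_inner_apply_self_le {E : Type*} [NormedAddCommGroup E]
    [InnerProductSpace ℝ E] (T : E →L[ℝ] E) (x : E) :
    |inner ℝ x (T x)| ≤ ‖T‖ * ‖x‖ ^ 2 :=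
  calc |inner ℝ x (T x)| ≤ ‖x‖ * ‖T x‖ := abs_real_inner_le_norm _ _
    _ ≤ ‖x‖ * (‖T‖ * ‖x‖) := by gcongr; exact T.le_opNorm x
    _ = ‖T‖ * ‖x‖ ^ 2 := by ring

theorem Matrix.eventually_card_filter_pos_mul_eigenvalues_le {X m : Type*} [TopologicalSpace X]
    [Fintype m] [DecidableEq m] {A : X → Matrix m m ℝ} {c : X} (hA : ContinuousAt A c)
    (hH : ∀ t, (A t).IsHermitian) (σ : ℝ) :
    ∀ᶠ t in 𝓝 c,
      #{i | 0 < σ * (hH c).eigenvalues i} ≤ #{i | 0 < σ * (hH t).eigenvalues i} := by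
  set T : X → EuclideanSpace ℝ m →L[ℝ] EuclideanSpace ℝ m :=
    fun t => toEuclideanCLM (𝕜 := ℝ) (A t)
  have hquad : ∀ t x, ∑ i, σ * (hH t).eigenvalues i * (hH t).eigenvectorBasis.repr x i ^ 2 =
      σ * inner ℝ x (T t x) := fun t x => by
    simp only [T, (hH t).inner_toEuclideanCLM_self, Finset.mul_sum, mul_assoc]
  obtain ⟨U, hUdim, μ, hμ, hU⟩ :=
    (hH c).eigenvectorBasis.exists_submodule_finrank_eq_card_filter_pos
      fun i => σ * (hH c).eigenvalues i
  have hT : Tendsto (fun t => |σ| * ‖T t - T c‖) (𝓝 c) (𝓝 0) := by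
    simpa using (tendsto_iff_norm_sub_tendsto_zero.1
      (continuous_toEuclideanCLM.continuousAt.comp hA)).const_mul |σ|
  filter_upwards [hT.eventually_lt_const hμ] with t ht
  rw [← hUdim]
  refine (hH t).eigenvectorBasis.toBasis.finrank_le_card_filter_pos _ U fun x hx hx0 => ?_
  simp only [OrthonormalBasis.coe_toBasis_repr_apply, hquad]
  have hxpos : 0 < ‖x‖ ^ 2 := by positivity
  have hpert : |σ * inner ℝ x (T t x) - σ * inner ℝ x (T c x)| ≤
      |σ| * ‖T t - T c‖ * ‖x‖ ^ 2 := by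
    rw [← mul_sub, ← inner_sub_right, ← _root_.sub_apply, abs_mul, mul_assoc]
    exact mul_le_mul_of_nonneg_left ((T t - T c).abs_real_inner_apply_self_le x) (abs_nonneg σ)
  have hc := hU x hx
  rw [hquad] at hc
  nlinarith [abs_le.1 hpert]

theorem Matrix.eventually_card_filter_pos_le_and_card_filter_neg_le {X m : Type*}
    [TopologicalSpace X] [Fintype m] [DecidableEq m] {A : X → Matrix m m ℝ} {c : X}
    (hA : ContinuousAt A c) (hH : ∀ t, (A t).IsHermitian) :
    ∀ᶠ t in 𝓝 c,
      #{i | 0 < (hH c).eigenvalues i} ≤ #{i | 0 < (hH t).eigenvalues i} ∧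
      #{i | (hH c).eigenvalues i < 0} ≤ #{i | (hH t).eigenvalues i < 0} := by
  filter_upwards [eventually_card_filter_pos_mul_eigenvalues_le hA hH 1,
    eventually_card_filter_pos_mul_eigenvalues_le hA hH (-1)] with t h₁ h₂
  simp only [one_mul, neg_one_mul, neg_pos] at h₁ h₂
  exact ⟨h₁, h₂⟩

theorem Finset.prod_pos_iff_even_card_filter_neg {ι R : Type*} [CommRing R] [LinearOrder R]
    [IsStrictOrderedRing R] {s : Finset ι} {f : ι → R} (hf : ∀ i ∈ s, f i ≠ 0) :
    0 < ∏ i ∈ s, f i ↔ Even #{i ∈ s | f i < 0} := by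
  have hsplit : ∏ i ∈ s, f i = (-1) ^ #{i ∈ s | f i < 0} * ∏ i ∈ s, |f i| := by
    calc ∏ i ∈ s, f i = ∏ i ∈ s, (if f i < 0 then -1 else 1) * |f i| :=
          prod_congr rfl fun i _ => by
            split_ifs with h
            · simp [abs_of_neg h]
            · simp [abs_of_nonneg (not_lt.1 h)]
      _ = _ := by rw [prod_mul_distrib, prod_ite, prod_const, prod_const_one, mul_one]
  rw [hsplit, mul_pos_iff_of_pos_right (prod_pos fun i hi => abs_pos.2 (hf i hi))]
  rcases Nat.even_or_odd #{i ∈ s | f i < 0} with h | h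
  · simp [h, h.neg_one_pow]
  · simp [h.neg_one_pow, Nat.not_even_iff_odd.2 h]

namespace Matrix.IsHermitian

variable {m : Type*} [Fintype m] [DecidableEq m] {B : Matrix m m ℝ}

theorem det_pos_iff_even_card_filter_neg (hB : B.IsHermitian) (hdet : B.det ≠ 0) :
    0 < B.det ↔ Even #{i | hB.eigenvalues i < 0} := by
  have hprod : B.det = ∏ i, hB.eigenvalues i := by simpa using hB.det_eq_prod_eigenvalues
  rw [hprod] at hdet ⊢
  exact prod_pos_iff_even_card_filter_neg fun i _ => prod_ne_zero_iff.1 hdet i (mem_univ i)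

theorem card_filter_pos_add_card_filter_neg (hB : B.IsHermitian) :
    #{i | 0 < hB.eigenvalues i} + #{i | hB.eigenvalues i < 0} = B.rank := by
  rw [hB.rank_eq_card_non_zero_eigs, Fintype.card_subtype, ← card_union_of_disjoint
    (disjoint_filter.2 fun i _ h₁ h₂ => lt_asymm h₁ h₂), ← filter_or]
  simp_rw [ne_iff_lt_or_gt, or_comm]

theorem card_filter_pos_add_card_filter_neg_of_det_ne_zero (hB : B.IsHermitian)
    (hdet : B.det ≠ 0) :
    #{i | 0 < hB.eigenvalues i} + #{i | hB.eigenvalues i < 0} = Fintype.card m := by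
  rw [hB.card_filter_pos_add_card_filter_neg,
    rank_of_isUnit _ ((isUnit_iff_isUnit_det _).2 hdet.isUnit)]

end Matrix.IsHermitian

/-- Let `A : ℝ → Matrix (Fin n) (Fin n) ℝ` be a continuous family of symmetric matrices whose
determinant does not vanish for `0 < |t − c| < ε`, and let `k₋` (resp. `k₊`) be the constant
number of positive eigenvalues of `A t` for `t ∈ (c − ε, c)` (resp. `t ∈ (c, c + ε)`).  If
`det (A t)` is strictly negative on one of the two intervals and strictly positive on the
other, then `k₊ − k₋` is odd; if moreover the kernel of `A c` is one-dimensional, then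
`|k₊ − k₋| = 1`. -/
theorem eigenvalue_count_jump_at_branch_point
    {n : ℕ} (A : ℝ → Matrix (Fin n) (Fin n) ℝ)
    (hcont : Continuous A) (hsymm : ∀ t : ℝ, (A t).IsSymm)
    (c ε : ℝ) (hε : 0 < ε)
    (hdet : ∀ t : ℝ, 0 < |t - c| → |t - c| < ε → (A t).det ≠ 0)
    (km kp : ℕ)
    (hkm : ∀ t ∈ Set.Ioo (c - ε) c,
      (Finset.univ.filter fun i =>
        0 < (show (A t).IsHermitian from hsymm t).eigenvalues i).card = km)
    (hkp : ∀ t ∈ Set.Ioo c (c + ε),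
      (Finset.univ.filter fun i =>
        0 < (show (A t).IsHermitian from hsymm t).eigenvalues i).card = kp)
    (hsign : ((∀ t ∈ Set.Ioo (c - ε) c, (A t).det < 0) ∧
        (∀ t ∈ Set.Ioo c (c + ε), 0 < (A t).det)) ∨
      ((∀ t ∈ Set.Ioo (c - ε) c, 0 < (A t).det) ∧
        (∀ t ∈ Set.Ioo c (c + ε), (A t).det < 0))) :
    Odd ((kp : ℤ) - (km : ℤ)) ∧
    (Module.finrank ℝ (LinearMap.ker (A c).mulVecLin) = 1 →
      |(kp : ℤ) - (km : ℤ)| = 1) := by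
  have hH : ∀ t, (A t).IsHermitian := hsymm
  have hsemi :=
    eventually_card_filter_pos_le_and_card_filter_neg_le (hcont.continuousAt (x := c)) hH
  obtain ⟨tm, ⟨hpos_m, hneg_m⟩, htm⟩ :=
    ((hsemi.filter_mono nhdsWithin_le_nhds).and (Ioo_mem_nhdsLT (by linarith : c - ε < c))).exists
  obtain ⟨tp, ⟨hpos_p, hneg_p⟩, htp⟩ :=
    ((hsemi.filter_mono nhdsWithin_le_nhds).and (Ioo_mem_nhdsGT (by linarith : c < c + ε))).exists
  have hdet_m : (A tm).det ≠ 0 := hdet tm (abs_pos.2 (sub_ne_zero.2 htm.2.ne))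
    (abs_sub_lt_iff.2 ⟨by linarith [htm.2], by linarith [htm.1]⟩)
  have hdet_p : (A tp).det ≠ 0 := hdet tp (abs_pos.2 (sub_ne_zero.2 htp.1.ne'))
    (abs_sub_lt_iff.2 ⟨by linarith [htp.2], by linarith [htp.1]⟩)
  have hsum_m := (hH tm).card_filter_pos_add_card_filter_neg_of_det_ne_zero hdet_m
  have hsum_p := (hH tp).card_filter_pos_add_card_filter_neg_of_det_ne_zero hdet_p
  have hflip : 0 < (A tm).det ↔ ¬ 0 < (A tp).det := by
    rcases hsign with ⟨hL, hR⟩ | ⟨hL, hR⟩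
    · simp [(hL tm htm).not_gt, hR tp htp]
    · simp [hL tm htm, (hR tp htp).not_gt]
  rw [(hH tm).det_pos_iff_even_card_filter_neg hdet_m,
    (hH tp).det_pos_iff_even_card_filter_neg hdet_p, Nat.even_iff, Nat.even_iff] at hflip
  simp only [Fintype.card_fin, hkm tm htm, hkp tp htp] at hsum_m hsum_p hpos_m hpos_p
  refine ⟨by rw [Int.odd_iff]; omega, fun hker => ?_⟩
  have hrank : (A c).rank + 1 = n := by
    simpa [hker, Matrix.rank] using LinearMap.finrank_range_add_finrank_ker (A c).mulVecLin
  have hrank_c := (hH c).card_filter_pos_add_card_filter_neg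
  rw [abs_eq zero_le_one]
  omega
end

section
/- Let Q₁, Q₂, Q₃ : ℝ³ → ℝ be real quadratic forms and f := Q₁Q₃ − Q₂². Assume that fderiv ℝ f P ≠ 0 for every P ∈ ℝ³∖{0} with f(P) = 0. Let ℝP² be the quotient topological space of ℝ³∖{0} by the scaling action of ℝ∖{0}, and let C be a connected subset of Z := { [P] ∈ ℝP² : f(P) = 0 }. Then either Q₁(P) ≥ 0 for all [P] ∈ C, or Q₁(P) ≤ 0 for all [P] ∈ C (these conditions are well-defined on ℝP² since Q₁ is homogeneous of even degree). In other words, on each oval of the real locus of the smooth quartic Δ, the quadratic form Q₁ does not change sign. -/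
/-- The scaling relation on nonzero vectors of `ℝⁿ`. -/
def projRel (n : ℕ) (v w : {x : Fin n → ℝ // x ≠ 0}) : Prop :=
  ∃ c : ℝ, c ≠ 0 ∧ c • (v : Fin n → ℝ) = (w : Fin n → ℝ)

/-- The real projective space `ℝPⁿ⁻¹`, as the quotient topological space of `ℝⁿ ∖ {0}` by the
scaling action of `ℝ ∖ {0}`. -/
def RP (n : ℕ) : Type := Quot (projRel n)

instance (n : ℕ) : TopologicalSpace (RP n) :=
  inferInstanceAs (TopologicalSpace (Quot (projRel n)))

/-!
On the real locus of `Q₁Q₃ = Q₂²` the values `Q₁` and `Q₃` have the same weak sign, so `Q₁` can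
change sign only by passing through a point where `Q₁ + Q₃` vanishes. At such a point all three
forms vanish, and then so does the differential `Q₃ dQ₁ + Q₁ dQ₃ − 2 Q₂ dQ₂`, which smoothness
excludes. Hence the sign of `Q₁ + Q₃`, which is well defined on `ℝP²`, splits the real locus into
two disjoint open pieces on which `Q₁ ≥ 0` and `Q₁ ≤ 0` respectively.
-/

open QuadraticMap

theorem QuadraticForm.contDiff {E : Type*} [NormedAddCommGroup E] [NormedSpace ℝ E]
    [FiniteDimensional ℝ E] (Q : QuadraticForm ℝ E) {n : WithTop ℕ∞} : ContDiff ℝ n Q := by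
  let B : E →L[ℝ] E →L[ℝ] ℝ := LinearMap.toContinuousLinearMap
    (LinearMap.toContinuousLinearMap.toLinearMap ∘ₗ associatedHom ℝ Q)
  have hB : ⇑Q = fun x => B x x := funext fun x => (associated_eq_self_apply ℝ Q x).symm
  rw [hB]
  exact B.contDiff.clm_apply contDiff_id

theorem fderiv_mul_sub_sq_eq_zero_s9 {𝕜 E : Type*} [NontriviallyNormedField 𝕜]
    [NormedAddCommGroup E] [NormedSpace 𝕜 E] {f g h : E → 𝕜} {x : E}
    (hf : DifferentiableAt 𝕜 f x) (hg : DifferentiableAt 𝕜 g x) (hh : DifferentiableAt 𝕜 h x)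
    (hf₀ : f x = 0) (hg₀ : g x = 0) (hh₀ : h x = 0) :
    fderiv 𝕜 (fun v => f v * g v - h v ^ 2) x = 0 := by
  rw [fderiv_fun_sub (hf.fun_mul hg) (hh.fun_pow 2), fderiv_fun_mul hf hg, fderiv_fun_pow 2 hh,
    hf₀, hg₀, hh₀]
  ext v
  simp

section SignOnLocus

variable {R : Type*} [CommRing R] [LinearOrder R] [IsStrictOrderedRing R] {a b c : R}

theorem eq_zero_of_mul_sub_sq_eq_zero_of_add_eq_zero (h : a * c - b ^ 2 = 0) (hs : a + c = 0) :
    a = 0 ∧ b = 0 ∧ c = 0 := by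
  have ha : a = 0 := by nlinarith [sq_nonneg b, sq_nonneg a]
  have hc : c = 0 := by linear_combination hs - ha
  refine ⟨ha, ?_, hc⟩
  nlinarith [sq_nonneg b]

theorem nonneg_of_mul_sub_sq_eq_zero_of_add_pos (h : a * c - b ^ 2 = 0) (hs : 0 < a + c) :
    0 ≤ a := by
  nlinarith [sq_nonneg b]

theorem nonpos_of_mul_sub_sq_eq_zero_of_add_neg (h : a * c - b ^ 2 = 0) (hs : a + c < 0) :
    a ≤ 0 := by
  nlinarith [sq_nonneg b]

end SignOnLocus

theorem discriminant_smul {R M : Type*} [CommRing R] [AddCommGroup M] [Module R M]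
    (Q₁ Q₂ Q₃ : QuadraticForm R M) (c : R) (v : M) :
    Q₁ (c • v) * Q₃ (c • v) - Q₂ (c • v) ^ 2 = (c * c) ^ 2 * (Q₁ v * Q₃ v - Q₂ v ^ 2) := by
  simp only [QuadraticMap.map_smul, smul_eq_mul]
  ring

section Discriminant

variable {E : Type*} [NormedAddCommGroup E] [NormedSpace ℝ E] [FiniteDimensional ℝ E]
  (Q₁ Q₂ Q₃ : QuadraticForm ℝ E)

theorem add_ne_zero_of_fderiv_discriminant_ne_zero {v : E}
    (hv : Q₁ v * Q₃ v - Q₂ v ^ 2 = 0)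
    (hsm : fderiv ℝ (fun v => Q₁ v * Q₃ v - Q₂ v ^ 2) v ≠ 0) :
    Q₁ v + Q₃ v ≠ 0 := by
  intro hs
  obtain ⟨h₁, h₂, h₃⟩ := eq_zero_of_mul_sub_sq_eq_zero_of_add_eq_zero hv hs
  have hdiff (Q : QuadraticForm ℝ E) : DifferentiableAt ℝ Q v :=
    (Q.contDiff (n := 1)).differentiable one_ne_zero v
  exact hsm <| fderiv_mul_sub_sq_eq_zero_s9 (hdiff Q₁) (hdiff Q₃) (hdiff Q₂) h₁ h₃ h₂

end Discriminant

namespace RP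

variable {n : ℕ}

theorem projRel_equivalence : Equivalence (projRel n) where
  refl P := ⟨1, one_ne_zero, one_smul ℝ _⟩
  symm := by
    rintro P P' ⟨c, hc, h⟩
    exact ⟨c⁻¹, inv_ne_zero hc, by rw [← h, smul_smul, inv_mul_cancel₀ hc, one_smul]⟩
  trans := by
    rintro P P' P'' ⟨c, hc, h⟩ ⟨d, hd, h'⟩
    exact ⟨d * c, mul_ne_zero hd hc, by rw [← h', ← h, smul_smul]⟩

theorem exists_smul_eq_of_mk_eq {P P' : {x : Fin n → ℝ // x ≠ 0}}
    (h : Quot.mk (projRel n) P = Quot.mk (projRel n) P') :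
    ∃ c : ℝ, c ≠ 0 ∧ c • (P : Fin n → ℝ) = P' :=
  projRel_equivalence.eqvGen_iff.1 (Quot.eqvGen_exact h)

def posLocus (Q : QuadraticForm ℝ (Fin n → ℝ)) : Set (RP n) :=
  Quot.lift (r := projRel n) (fun P => 0 < Q P) (by
    rintro P _ ⟨c, hc, h⟩
    rw [← h, QuadraticMap.map_smul, smul_eq_mul, mul_pos_iff_of_pos_left (mul_self_pos.2 hc)])

theorem mk_mem_posLocus {Q : QuadraticForm ℝ (Fin n → ℝ)} {P : {x : Fin n → ℝ // x ≠ 0}} :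
    Quot.mk _ P ∈ posLocus Q ↔ 0 < Q P :=
  Iff.rfl

theorem mk_mem_posLocus_neg {Q : QuadraticForm ℝ (Fin n → ℝ)} {P : {x : Fin n → ℝ // x ≠ 0}} :
    Quot.mk _ P ∈ posLocus (-Q) ↔ Q P < 0 :=
  mk_mem_posLocus.trans neg_pos

theorem isOpen_posLocus (Q : QuadraticForm ℝ (Fin n → ℝ)) : IsOpen (posLocus Q) :=
  isQuotientMap_quot_mk.isOpen_preimage.1 <|
    isOpen_lt continuous_const (Q.contDiff (n := 0).continuous.comp continuous_subtype_val)

theorem disjoint_posLocus_neg (Q : QuadraticForm ℝ (Fin n → ℝ)) :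
    Disjoint (posLocus Q) (posLocus (-Q)) := by
  refine Set.disjoint_left.2 fun x => ?_
  induction x using Quot.ind with
  | mk P =>
    intro h h'
    exact (mk_mem_posLocus.1 h).not_gt (mk_mem_posLocus_neg.1 h')

end RP

/-- On each connected subset of the real locus of the smooth quartic
`Δ = {Q₁Q₃ − Q₂² = 0} ⊆ ℝP²`, the quadratic form `Q₁` does not change sign. -/
theorem q1_does_not_change_sign_on_oval
    (Q₁ Q₂ Q₃ : QuadraticForm ℝ (Fin 3 → ℝ))
    (hsm : ∀ P : Fin 3 → ℝ, P ≠ 0 → Q₁ P * Q₃ P - Q₂ P ^ 2 = 0 →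
      fderiv ℝ (fun v => Q₁ v * Q₃ v - Q₂ v ^ 2) P ≠ 0)
    (C : Set (RP 3))
    (hCZ : C ⊆ {x | ∃ P : {v : Fin 3 → ℝ // v ≠ 0}, Quot.mk (projRel 3) P = x ∧
      Q₁ (P : Fin 3 → ℝ) * Q₃ (P : Fin 3 → ℝ) - Q₂ (P : Fin 3 → ℝ) ^ 2 = 0})
    (hC : IsPreconnected C) :
    (∀ P : {v : Fin 3 → ℝ // v ≠ 0}, Quot.mk (projRel 3) P ∈ C →
      0 ≤ Q₁ (P : Fin 3 → ℝ)) ∨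
    (∀ P : {v : Fin 3 → ℝ // v ≠ 0}, Quot.mk (projRel 3) P ∈ C →
      Q₁ (P : Fin 3 → ℝ) ≤ 0) := by
  have hZ : ∀ P : {v : Fin 3 → ℝ // v ≠ 0}, Quot.mk (projRel 3) P ∈ C →
      Q₁ P * Q₃ P - Q₂ P ^ 2 = 0 := by
    intro P hP
    obtain ⟨P', hP', hf⟩ := hCZ hP
    obtain ⟨c, -, hc⟩ := RP.exists_smul_eq_of_mk_eq hP'
    rw [← hc, discriminant_smul, hf, mul_zero]
  have hcover : C ⊆ RP.posLocus (Q₁ + Q₃) ∪ RP.posLocus (-(Q₁ + Q₃)) := by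
    intro x hx
    obtain ⟨P, rfl, hP⟩ := hCZ hx
    rcases (add_ne_zero_of_fderiv_discriminant_ne_zero Q₁ Q₂ Q₃ hP (hsm P P.2 hP)).lt_or_gt
      with hneg | hpos
    · exact .inr (RP.mk_mem_posLocus_neg.2 hneg)
    · exact .inl (RP.mk_mem_posLocus.2 hpos)
  rcases hC.subset_or_subset (RP.isOpen_posLocus _) (RP.isOpen_posLocus _)
    (RP.disjoint_posLocus_neg _) hcover with hpos | hneg
  · exact .inl fun P hP =>
      nonneg_of_mul_sub_sq_eq_zero_of_add_pos (hZ P hP) (RP.mk_mem_posLocus.1 (hpos hP))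
  · exact .inr fun P hP =>
      nonpos_of_mul_sub_sq_eq_zero_of_add_neg (hZ P hP) (RP.mk_mem_posLocus_neg.1 (hneg hP))
end

section
/- Define the quadratic forms Q₁(u,v,w) := −u² − v² − w², Q₂(u,v,w) := −u² − v² + w², Q₃(u,v,w) := −2u² − 9v² − 3w² on ℝ³. Then: (1) for every (t₀, t₁) ∈ ℝ²∖{(0,0)} and every (u,v,w) ∈ ℝ³∖{(0,0,0)}, t₀²Q₁(u,v,w) + 2t₀t₁Q₂(u,v,w) + t₁²Q₃(u,v,w) < 0; hence there is no tuple ((t₀,t₁),(u,v,w),z) with (t₀,t₁) ≠ 0, (u,v,w) ≠ 0 and z² = t₀²Q₁(u,v,w) + 2t₀t₁Q₂(u,v,w) + t₁²Q₃(u,v,w), i.e. the double cover Y has no real points; (2) (Q₁Q₃ − Q₂²)(u,v,w) > 0 for every (u,v,w) ∈ ℝ³∖{0}, i.e. the discriminant quartic Δ has no real points; (3) the polynomial t⁶ + 2t⁵ + 10t⁴ + 4t³ + 19t² + 30t + 54 is strictly positive for every t ∈ ℝ, i.e. the genus 2 curve Γ has no real Weierstrass points. -/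
/-!
All three quadrics are diagonal, so the pencil `t₀²Q₁ + 2t₀t₁Q₂ + t₁²Q₃` is the diagonal form
with coefficients `−((t₀+t₁)² + t₁²)`, `−((t₀+t₁)² + 8t₁²)`, `−((t₀−t₁)² + 2t₁²)`, each negative
for `(t₀, t₁) ≠ 0`. The discriminant is `Q₁Q₃ − Q₂² = Q₁² + (a sum of squares)`, positive since `Q₁`
is negative definite, and the sextic is an explicit sum of squares plus a positive constant.
-/

/-- `Q₁(u,v,w) = −u² − v² − w²`. -/
def Q₁ (u v w : ℝ) : ℝ := -u ^ 2 - v ^ 2 - w ^ 2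

/-- `Q₂(u,v,w) = −u² − v² + w²`. -/
def Q₂ (u v w : ℝ) : ℝ := -u ^ 2 - v ^ 2 + w ^ 2

/-- `Q₃(u,v,w) = −2u² − 9v² − 3w²`. -/
def Q₃ (u v w : ℝ) : ℝ := -2 * u ^ 2 - 9 * v ^ 2 - 3 * w ^ 2

lemma add_sq_add_mul_sq_pos {x y : ℝ} (a : ℝ) {c : ℝ} (hc : 0 < c) (h : (x, y) ≠ (0, 0)) :
    0 < (x + a * y) ^ 2 + c * y ^ 2 := by
  by_cases hy : y = 0
  · have hx : x ≠ 0 := fun hx => h (by simp [hx, hy])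
    simp [hy, hx, sq_pos_of_ne_zero]
  · positivity

lemma weighted_sum_sq_pos {a b c u v w : ℝ} (ha : 0 < a) (hb : 0 < b) (hc : 0 < c)
    (h : (u, v, w) ≠ (0, 0, 0)) : 0 < a * u ^ 2 + b * v ^ 2 + c * w ^ 2 := by
  simp only [ne_eq, Prod.mk.injEq, not_and_or] at h
  rcases h with h | h | h <;> positivity

lemma Q₁_neg {u v w : ℝ} (h : (u, v, w) ≠ (0, 0, 0)) : Q₁ u v w < 0 := by
  have := weighted_sum_sq_pos one_pos one_pos one_pos h
  rw [Q₁]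
  linarith

lemma pencil_eq (t₀ t₁ u v w : ℝ) :
    t₀ ^ 2 * Q₁ u v w + 2 * t₀ * t₁ * Q₂ u v w + t₁ ^ 2 * Q₃ u v w =
      -(((t₀ + t₁) ^ 2 + t₁ ^ 2) * u ^ 2 + ((t₀ + t₁) ^ 2 + 8 * t₁ ^ 2) * v ^ 2 +
        ((t₀ - t₁) ^ 2 + 2 * t₁ ^ 2) * w ^ 2) := by
  simp only [Q₁, Q₂, Q₃]
  ring

lemma pencil_neg {t₀ t₁ u v w : ℝ} (ht : (t₀, t₁) ≠ (0, 0)) (h : (u, v, w) ≠ (0, 0, 0)) :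
    t₀ ^ 2 * Q₁ u v w + 2 * t₀ * t₁ * Q₂ u v w + t₁ ^ 2 * Q₃ u v w < 0 := by
  rw [pencil_eq, neg_lt_zero]
  have hu := add_sq_add_mul_sq_pos 1 one_pos ht
  have hv := add_sq_add_mul_sq_pos 1 (by norm_num : (0 : ℝ) < 8) ht
  have hw := add_sq_add_mul_sq_pos (-1) two_pos ht
  simp only [one_mul, neg_one_mul, ← sub_eq_add_neg] at hu hv hw
  exact weighted_sum_sq_pos hu hv hw h

lemma discriminant_eq (u v w : ℝ) :
    Q₁ u v w * Q₃ u v w - Q₂ u v w ^ 2 =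
      Q₁ u v w ^ 2 + (7 * v ^ 4 + w ^ 4 + 7 * u ^ 2 * v ^ 2 + 5 * u ^ 2 * w ^ 2 +
        12 * v ^ 2 * w ^ 2) := by
  simp only [Q₁, Q₂, Q₃]
  ring

lemma discriminant_pos {u v w : ℝ} (h : (u, v, w) ≠ (0, 0, 0)) :
    0 < Q₁ u v w * Q₃ u v w - Q₂ u v w ^ 2 := by
  have := (Q₁_neg h).ne
  rw [discriminant_eq]
  positivity

lemma weierstrass_sextic_pos (t : ℝ) :
    0 < t ^ 6 + 2 * t ^ 5 + 10 * t ^ 4 + 4 * t ^ 3 + 19 * t ^ 2 + 30 * t + 54 := by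
  have : t ^ 6 + 2 * t ^ 5 + 10 * t ^ 4 + 4 * t ^ 3 + 19 * t ^ 2 + 30 * t + 54 =
      (t ^ 3 + t ^ 2 + 2 * t) ^ 2 + 5 * t ^ 4 + 15 * (t + 1) ^ 2 + 39 := by
    ring
  rw [this]
  positivity

/-- For the quadrics `Q₁ = −u²−v²−w²`, `Q₂ = −u²−v²+w²`, `Q₃ = −2u²−9v²−3w²`:
(1) the form `t₀²Q₁ + 2t₀t₁Q₂ + t₁²Q₃` is strictly negative at all nonzero arguments, so the
double cover `Y` has no real points; (2) `Q₁Q₃ − Q₂² > 0` away from the origin, so the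
discriminant quartic `Δ` has no real points; (3) the sextic
`t⁶ + 2t⁵ + 10t⁴ + 4t³ + 19t² + 30t + 54` is strictly positive on `ℝ`, so the genus 2 curve
`Γ` has no real Weierstrass points. -/
theorem pointless_example_no_ovals :
    (∀ t₀ t₁ u v w : ℝ, (t₀, t₁) ≠ (0, 0) → (u, v, w) ≠ (0, 0, 0) →
      t₀ ^ 2 * Q₁ u v w + 2 * t₀ * t₁ * Q₂ u v w + t₁ ^ 2 * Q₃ u v w < 0) ∧
    (¬ ∃ t₀ t₁ u v w z : ℝ, (t₀, t₁) ≠ (0, 0) ∧ (u, v, w) ≠ (0, 0, 0) ∧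
      z ^ 2 = t₀ ^ 2 * Q₁ u v w + 2 * t₀ * t₁ * Q₂ u v w + t₁ ^ 2 * Q₃ u v w) ∧
    (∀ u v w : ℝ, (u, v, w) ≠ (0, 0, 0) →
      0 < Q₁ u v w * Q₃ u v w - Q₂ u v w ^ 2) ∧
    (∀ t : ℝ, 0 < t ^ 6 + 2 * t ^ 5 + 10 * t ^ 4 + 4 * t ^ 3 + 19 * t ^ 2 + 30 * t + 54) := by
  refine ⟨fun _ _ _ _ _ => pencil_neg, ?_, fun _ _ _ => discriminant_pos, weierstrass_sextic_pos⟩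
  rintro ⟨t₀, t₁, u, v, w, z, ht, h, hz⟩
  have := pencil_neg ht h
  rw [← hz] at this
  exact (sq_nonneg z).not_gt this
end
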